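/- arXiv:math/0702193 — 3 statements merged into one kernel-verified Lean document; each statement's English description precedes it below -/
import Mathlib

section
/- Let g be a finite-dimensional Lie algebra over a field of characteristic 0, and let (f,h,e) be an sl2-triple in g, i.e., [e,f] = h, [h,e] = 2e, [h,f] = -2f. Then for every z ∈ g with [h,z] = 2z there exists u ∈ g with [h,u] = 0 and [u,e] = z; in other words, [g(0), e] = g(2), where g(m) denotes the m-eigenspace of ad h. -/
section aux

variable {k L : Type*} [Field k] [CharZero k] [LieRing L] [LieAlgebra k L]
  [FiniteDimensional k L]

/-- Key injectivity: if `⁅h,z⁆ = 2z` and `⁅e,⁅f,z⁆⁆ = 0` then `z = 0`. -/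
lemma sl2_aux_inj (e f h : L) (hef : ⁅e, f⁆ = h)
    (hhe : ⁅h, e⁆ = (2 : k) • e) (hhf : ⁅h, f⁆ = (-2 : k) • f)
    (z : L) (hz : ⁅h, z⁆ = (2 : k) • z) (h0 : ⁅e, ⁅f, z⁆⁆ = 0) : z = 0 := by
  by_contra hne
  set y : ℕ → L := fun n => ((LieAlgebra.ad k L e) ^ n) z with hy
  have hy0 : y 0 = z := rfl
  have hysucc : ∀ n, y (n + 1) = ⁅e, y n⁆ := by
    intro n
    simp only [hy, pow_succ', Module.End.mul_apply, LieAlgebra.ad_apply]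
  -- h-eigenvalues
  have h_eig : ∀ n, ⁅h, y n⁆ = ((2 : k) + 2 * n) • y n := by
    intro n
    induction n with
    | zero => simpa [hy0] using hz
    | succ n ih =>
      rw [hysucc, leibniz_lie, hhe, ih, lie_smul, smul_lie, ← add_smul]
      congr 1
      push_cast
      ring
  -- f-action on the string
  have h_f : ∀ n, ⁅f, y (n + 1)⁆ = (-((n : k) + 1) * ((n : k) + 2)) • y n := by
    intro n
    induction n with
    | zero =>
      rw [hysucc, leibniz_lie]
      have hfe : ⁅f, e⁆ = -h := by rw [← hef]; exact (lie_skew f e).symm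
      rw [hfe, neg_lie, hy0, h0, add_zero, hz, ← neg_smul]
      congr 1
      push_cast
      ring
    | succ n ih =>
      rw [hysucc (n + 1), leibniz_lie]
      have hfe : ⁅f, e⁆ = -h := by rw [← hef]; exact (lie_skew f e).symm
      rw [hfe, neg_lie, h_eig (n + 1), ih, lie_smul, ← hysucc, ← neg_smul, ← add_smul]
      congr 1
      push_cast
      ring
  -- nonvanishing
  have h_ne : ∀ n, y n ≠ 0 := by
    intro n
    induction n with
    | zero => simpa [hy0] using hne
    | succ n ih =>
      intro hcon
      apply ih
      have := h_f n
      rw [hcon, lie_zero] at this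
      have hc : (-((n : k) + 1) * ((n : k) + 2)) ≠ 0 := by
        have h1 : ((n : k) + 1) ≠ 0 := Nat.cast_add_one_ne_zero n
        have h2 : ((n : k) + 2) ≠ 0 := by
          have : (((n + 2 : ℕ)) : k) ≠ 0 := Nat.cast_ne_zero.mpr (by omega)
          push_cast at this
          exact this
        exact mul_ne_zero (neg_ne_zero.mpr h1) h2
      exact (smul_eq_zero_iff_right hc).mp this.symm
  -- eigenvectors for distinct eigenvalues: contradiction with finite dimension
  have hev : ∀ n : ℕ, (LieAlgebra.ad k L h).HasEigenvector ((2 : k) + 2 * n) (y n) := by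
    intro n
    refine ⟨?_, h_ne n⟩
    rw [Module.End.mem_eigenspace_iff, LieAlgebra.ad_apply]
    exact h_eig n
  have hinj : Function.Injective (fun n : ℕ => (2 : k) + 2 * n) := by
    intro a b hab
    simp only at hab
    have h2 : (2 : k) ≠ 0 := two_ne_zero
    have : (a : k) = b := mul_left_cancel₀ h2 (add_left_cancel hab)
    exact_mod_cast this
  have hli := (LieAlgebra.ad k L h).eigenvectors_linearIndependent' _ hinj _ hev
  haveI : Finite ℕ := hli.finite
  exact not_finite ℕ

end aux

/-- Let `g` be a finite-dimensional Lie algebra over a field of characteristic `0` and let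
`(f,h,e)` be an `sl2`-triple in `g`.  Then for every `z` with `⁅h,z⁆ = 2z` there is a `u`
with `⁅h,u⁆ = 0` and `⁅u,e⁆ = z`; that is, `[g(0), e] = g(2)`. -/
theorem surjective_ad_e_from_zero_eigenspace_to_two_eigenspace
    (k L : Type*) [Field k] [CharZero k] [LieRing L] [LieAlgebra k L]
    [FiniteDimensional k L]
    (e f h : L) (hef : ⁅e, f⁆ = h)
    (hhe : ⁅h, e⁆ = (2 : k) • e) (hhf : ⁅h, f⁆ = (-2 : k) • f) :
    ∀ z : L, ⁅h, z⁆ = (2 : k) • z → ∃ u : L, ⁅h, u⁆ = 0 ∧ ⁅u, e⁆ = z := by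
  intro z hz
  -- the composite `w ↦ ⁅e, ⁅f, w⁆⁆` preserves the 2-eigenspace of `ad h`
  set V : Submodule k L := Module.End.eigenspace (LieAlgebra.ad k L h) (2 : k) with hV
  have hmemV : ∀ w : L, w ∈ V ↔ ⁅h, w⁆ = (2 : k) • w := by
    intro w
    rw [hV, Module.End.mem_eigenspace_iff, LieAlgebra.ad_apply]
  set A : Module.End k L := (LieAlgebra.ad k L e) ∘ₗ (LieAlgebra.ad k L f) with hA
  have hAapp : ∀ w : L, A w = ⁅e, ⁅f, w⁆⁆ := fun w => rfl
  have hf0 : ∀ w : L, ⁅h, w⁆ = (2 : k) • w → ⁅h, ⁅f, w⁆⁆ = 0 := by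
    intro w hw
    rw [leibniz_lie, hhf, hw, lie_smul, smul_lie, neg_smul, neg_add_cancel]
  have hmap : ∀ w ∈ V, A w ∈ V := by
    intro w hw
    rw [hmemV] at hw ⊢
    rw [hAapp, leibniz_lie, hhe, hf0 w hw, lie_zero, add_zero, smul_lie]
  -- restriction of A to V is injective, hence surjective
  have hinj : Function.Injective (A.restrict hmap) := by
    intro ⟨w₁, hw₁⟩ ⟨w₂, hw₂⟩ hw
    have : A (w₁ - w₂) = 0 := by
      have := congrArg (Subtype.val) hw
      simp only [LinearMap.restrict_apply] at this
      simp [map_sub, this]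
    have hmem : ⁅h, w₁ - w₂⁆ = (2 : k) • (w₁ - w₂) := by
      rw [hmemV] at hw₁ hw₂
      rw [lie_sub, hw₁, hw₂, smul_sub]
    have := sl2_aux_inj e f h hef hhe hhf (w₁ - w₂) hmem (by rw [← hAapp]; exact this)
    exact Subtype.ext (sub_eq_zero.mp this)
  have hsurj : Function.Surjective (A.restrict hmap) :=
    (LinearMap.injective_iff_surjective).mp hinj
  obtain ⟨⟨w, hwV⟩, hww⟩ := hsurj ⟨z, (hmemV z).mpr hz⟩
  refine ⟨-⁅f, w⁆, ?_, ?_⟩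
  · rw [lie_neg, hf0 w ((hmemV w).mp hwV), neg_zero]
  · have : A w = z := congrArg Subtype.val hww
    rw [neg_lie, ← lie_skew, neg_neg, ← hAapp, this]
end

section
/- Let K be a finite-dimensional Lie algebra over an infinite field k with basis x_1,…,x_n, and let ψ_1,…,ψ_n be the dual basis of K*. Then there exists a nonzero polynomial P ∈ k[T_1,…,T_n] such that for every tuple (t_1,…,t_n) ∈ k^n with P(t_1,…,t_n) ≠ 0, the linear functional f = t_1ψ_1 + … + t_nψ_n satisfies dim K^f = ind(K); in particular such a tuple exists, so generic functionals attain the index. -/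
variable (k K : Type*) [Field k] [LieRing K] [LieAlgebra k K]

/-- The stabilizer `K^f = {x ∈ K : f ⁅x, y⁆ = 0 for all y ∈ K}`, as a subspace of `K`. -/
def lieStab (f : Module.Dual k K) : Submodule k K where
  carrier := {x : K | ∀ y : K, f ⁅x, y⁆ = 0}
  add_mem' := by
    intro a b ha hb y
    simp [add_lie, ha y, hb y]
  zero_mem' := by intro y; simp
  smul_mem' := by
    intro c a ha y
    simp [smul_lie, ha y]

/-!
Write `B_f(x, y) = f ⁅x, y⁆`, so that `K^f = ker B_f` and `dim K^f = n - rank B_f`. In the basis `b`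
the Gram matrix of `B_f` has entries that are linear forms in the coordinates `t` of `f` (with the
structure constants as coefficients). Choose `f₀` with `dim K^{f₀} = ind K` and put
`r = rank B_{f₀}`. There are constant matrices `W`, `U` with `W B_{f₀} U = 1 ∈ k^{r×r}`, and
`P(t) = det (W B_{f(t)} U)` is a polynomial with `P(f₀) = 1`. Wherever `P(t) ≠ 0` the rank of
`B_{f(t)}` is at least `r`, so `dim K^{f(t)} ≤ ind K`, and the reverse inequality is the definition
of the index.
-/

open MvPolynomial

namespace Matrix

variable {k} {m n : Type*} [Fintype m] [Fintype n]

theorem exists_mul_mul_eq_one (A : Matrix m n k) :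
    ∃ (W : Matrix (Fin A.rank) m k) (U : Matrix n (Fin A.rank) k), W * A * U = 1 := by
  classical
  set R := LinearMap.range A.mulVecLin
  obtain ⟨s, hs⟩ := A.mulVecLin.rangeRestrict.exists_rightInverse_of_surjective
    A.mulVecLin.range_rangeRestrict
  obtain ⟨p, hp⟩ := R.subtype.exists_leftInverse_of_injective R.ker_subtype
  let e : R ≃ₗ[k] (Fin A.rank → k) :=
    LinearEquiv.ofFinrankEq _ _ (Module.finrank_fin_fun k).symm
  refine ⟨LinearMap.toMatrix' (e.toLinearMap ∘ₗ p),
    LinearMap.toMatrix' (s ∘ₗ e.symm.toLinearMap), toLin'.injective ?_⟩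
  have hA : toLin' A = R.subtype ∘ₗ A.mulVecLin.rangeRestrict := by
    rw [toLin'_apply']; exact (LinearMap.subtype_comp_codRestrict _ _ _).symm
  rw [toLin'_mul, toLin'_mul, toLin'_toMatrix', toLin'_toMatrix', toLin'_one, hA]
  calc _ = e.toLinearMap ∘ₗ (p ∘ₗ R.subtype) ∘ₗ (A.mulVecLin.rangeRestrict ∘ₗ s) ∘ₗ
        e.symm.toLinearMap := by simp only [LinearMap.comp_assoc]
    _ = LinearMap.id := by rw [hp, hs]; ext; simp

theorem exists_eval_ne_zero_forall_rank_map_eval_le {σ : Type*}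
    (M : Matrix m n (MvPolynomial σ k)) (t₀ : σ → k) :
    ∃ P : MvPolynomial σ k, eval t₀ P ≠ 0 ∧
      ∀ t, eval t P ≠ 0 → (M.map (eval t₀)).rank ≤ (M.map (eval t)).rank := by
  obtain ⟨W, U, hWU⟩ := (M.map (eval t₀)).exists_mul_mul_eq_one
  let N : Matrix (Fin (M.map (eval t₀)).rank) (Fin (M.map (eval t₀)).rank) (MvPolynomial σ k) :=
    W.map (C (σ := σ)) * M * U.map (C (σ := σ))
  have eval_det (t : σ → k) : eval t N.det = (W * M.map (eval t) * U).det := by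
    rw [RingHom.map_det, RingHom.mapMatrix_apply, Matrix.map_mul, Matrix.map_mul, Matrix.map_map,
      Matrix.map_map]
    simp only [Function.comp_def, eval_C, map_id']
  refine ⟨N.det, by simp [eval_det, hWU], fun t ht => ?_⟩
  calc (M.map (eval t₀)).rank = (W * M.map (eval t) * U).rank := by
        rw [rank_of_det_ne_zero (by rwa [← eval_det]), Fintype.card_fin]
    _ ≤ (M.map (eval t)).rank :=
        (rank_mul_le_left _ _).trans (rank_mul_le_right _ _)

end Matrix

section

variable {k K}

def kirillovForm (f : Module.Dual k K) : K →ₗ[k] Module.Dual k K :=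
  LinearMap.mk₂ k (fun x y => f ⁅x, y⁆) (fun _ _ _ => by simp [add_lie])
    (fun _ _ _ => by simp [smul_lie]) (fun _ _ _ => by simp [lie_add])
    (fun _ _ _ => by simp [lie_smul])

@[simp]
theorem kirillovForm_apply (f : Module.Dual k K) (x y : K) : kirillovForm f x y = f ⁅x, y⁆ :=
  rfl

theorem lieStab_eq_ker_kirillovForm (f : Module.Dual k K) :
    lieStab k K f = LinearMap.ker (kirillovForm f) := by
  ext x
  simp [lieStab, LinearMap.ext_iff]

variable {ι : Type*} [Fintype ι] [DecidableEq ι]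

theorem finrank_lieStab_add_rank_toMatrix_kirillovForm (b : Module.Basis ι k K)
    (f : Module.Dual k K) :
    Module.finrank k (lieStab k K f) +
      (LinearMap.toMatrix b b.dualBasis (kirillovForm f)).rank = Fintype.card ι := by
  have := Module.Finite.of_basis b
  rw [Matrix.rank_eq_finrank_range_toLin _ b.dualBasis b, Matrix.toLin_toMatrix,
    lieStab_eq_ker_kirillovForm, add_comm, LinearMap.finrank_range_add_finrank_ker,
    Module.finrank_eq_card_basis b]

noncomputable def kirillovMatrix (b : Module.Basis ι k K) : Matrix ι ι (MvPolynomial ι k) :=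
  Matrix.of fun i j => ∑ l, C (b.repr ⁅b j, b i⁆ l) * X l

theorem kirillovMatrix_map_eval (b : Module.Basis ι k K) (t : ι → k) :
    (kirillovMatrix b).map (eval t) =
      LinearMap.toMatrix b b.dualBasis (kirillovForm (∑ l, t l • b.dualBasis l)) := by
  ext i j
  simp [kirillovMatrix, LinearMap.toMatrix_apply, b.dualBasis_repr, mul_comm]

end

theorem exists_polynomial_generic_functional_attains_index
    (n : ℕ) (b : Module.Basis (Fin n) k K) :
    ∃ P : MvPolynomial (Fin n) k, P ≠ 0 ∧
      (∀ t : Fin n → k, MvPolynomial.eval t P ≠ 0 →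
        Module.finrank k (lieStab k K (∑ i, t i • b.dualBasis i)) =
          sInf {m : ℕ | ∃ f : Module.Dual k K,
            Module.finrank k (lieStab k K f) = m}) ∧
      ∃ t : Fin n → k, MvPolynomial.eval t P ≠ 0 := by
  set S := {m : ℕ | ∃ f : Module.Dual k K, Module.finrank k (lieStab k K f) = m}
  obtain ⟨f₀, hf₀⟩ : sInf S ∈ S := Nat.sInf_mem ⟨_, 0, rfl⟩
  obtain ⟨P, hP₀, hP⟩ :=
    (kirillovMatrix b).exists_eval_ne_zero_forall_rank_map_eval_le (b.dualBasis.repr f₀)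
  refine ⟨P, fun h => hP₀ (by simp [h]),
    fun t ht => le_antisymm ?_ (Nat.sInf_le ⟨_, rfl⟩), _, hP₀⟩
  have h_rank := hP t ht
  rw [kirillovMatrix_map_eval, kirillovMatrix_map_eval, b.dualBasis.sum_repr] at h_rank
  have h₀ := finrank_lieStab_add_rank_toMatrix_kirillovForm b f₀
  have h_t := finrank_lieStab_add_rank_toMatrix_kirillovForm b (∑ i, t i • b.dualBasis i)
  omega
end

section
/- Let k be an infinite field and let M be an m×n matrix whose entries are polynomials in k[T_1,…,T_N]. Then the rank of M, viewed as a matrix over the rational function field k(T_1,…,T_N), equals the maximum over all points t ∈ k^N of the rank over k of the specialized matrix M(t) obtained by evaluating every entry at t. -/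
/-!
Over a field, the rank of a matrix is the largest size of a nonvanishing minor, and minors
commute with ring homomorphisms. A minor of `M` that vanishes in `k(T)` is the zero polynomial
and so vanishes at every point, which bounds each specialized rank by the generic one. Conversely
a nonzero maximal minor over `k(T)` is a nonzero polynomial, and since `k` is infinite it does
not vanish at some `t ∈ k^N`, where `M(t)` therefore has full generic rank.
-/

namespace Matrix

variable {m n R S K L : Type*}

theorem det_submatrix_map [CommRing R] [CommRing S] (φ : R →+* S) (A : Matrix m n R) {r : ℕ}
    (f : Fin r → m) (g : Fin r → n) : ((A.map φ).submatrix f g).det = φ (A.submatrix f g).det :=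
  (φ.map_det _).symm

theorem le_rank_of_det_submatrix_ne_zero [Fintype n] [CommRing R] [IsDomain R]
    (A : Matrix m n R) {r : ℕ} (f : Fin r → m) (g : Fin r → n) (h : (A.submatrix f g).det ≠ 0) :
    r ≤ A.rank := by
  simpa [rank_of_det_ne_zero h] using A.rank_submatrix_le f g

variable [Fintype m] [Fintype n]

theorem exists_linearIndependent_row_submatrix_of_le_rank [Field K] (A : Matrix m n K) {r : ℕ}
    (hr : r ≤ A.rank) : ∃ f : Fin r → m, LinearIndependent K (A.submatrix f id).row := by
  obtain ⟨κ, a, ha, hspan, hli⟩ := exists_linearIndependent' K A.row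
  have : Finite κ := Finite.of_injective a ha
  have : Fintype κ := Fintype.ofFinite κ
  have hcard : Fintype.card κ = A.rank := by
    rw [rank_eq_finrank_span_row, ← hspan, finrank_span_eq_card hli]
  let e : Fin r ↪ κ := (Fin.castLEEmb hr).trans (Fintype.equivFinOfCardEq hcard).symm.toEmbedding
  exact ⟨a ∘ e, hli.comp e e.injective⟩

theorem le_rank_iff_exists_det_submatrix_ne_zero [Field K] (A : Matrix m n K) {r : ℕ} :
    r ≤ A.rank ↔ ∃ (f : Fin r → m) (g : Fin r → n), (A.submatrix f g).det ≠ 0 := by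
  refine ⟨fun hr => ?_, fun ⟨f, g, h⟩ => A.le_rank_of_det_submatrix_ne_zero f g h⟩
  obtain ⟨f, hf⟩ := A.exists_linearIndependent_row_submatrix_of_le_rank hr
  have hrank : (A.submatrix f id)ᵀ.rank = r := by
    rw [rank_transpose, hf.rank_matrix, Fintype.card_fin]
  obtain ⟨g, hg⟩ := (A.submatrix f id)ᵀ.exists_linearIndependent_row_submatrix_of_le_rank hrank.ge
  have hunit : IsUnit (A.submatrix f g)ᵀ := linearIndependent_rows_iff_isUnit.1 hg
  rw [isUnit_iff_isUnit_det, det_transpose, isUnit_iff_ne_zero] at hunit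
  exact ⟨f, g, hunit⟩

theorem rank_map_le_rank_map_of_ker_le [CommRing R] [Field K] [Field L] {φ : R →+* K}
    {ψ : R →+* L} (h : RingHom.ker φ ≤ RingHom.ker ψ) (A : Matrix m n R) :
    (A.map ψ).rank ≤ (A.map φ).rank := by
  obtain ⟨f, g, hfg⟩ := (A.map ψ).le_rank_iff_exists_det_submatrix_ne_zero.1 le_rfl
  refine (A.map φ).le_rank_of_det_submatrix_ne_zero f g fun hφ => hfg ?_
  rw [det_submatrix_map] at hφ ⊢
  exact h hφ

end Matrix

theorem MvPolynomial.exists_eval_ne_zero {σ R : Type*} [CommRing R] [IsDomain R] [Infinite R]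
    {p : MvPolynomial σ R} (hp : p ≠ 0) : ∃ x, eval x p ≠ 0 := by
  by_contra! h
  exact hp (funext fun x => by simpa using h x)

namespace Matrix

variable {m n σ k K : Type*} [Fintype m] [Fintype n] [Field k] [Infinite k] [Field K]

theorem rank_map_eq_iSup_rank_map_eval {φ : MvPolynomial σ k →+* K} (hφ : Function.Injective φ)
    (A : Matrix m n (MvPolynomial σ k)) :
    (A.map φ).rank = ⨆ t : σ → k, (A.map (MvPolynomial.eval t)).rank := by
  have hker t : RingHom.ker φ ≤ RingHom.ker (MvPolynomial.eval t) := by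
    simp [(RingHom.injective_iff_ker_eq_bot φ).1 hφ]
  have hle t : (A.map (MvPolynomial.eval t)).rank ≤ (A.map φ).rank :=
    rank_map_le_rank_map_of_ker_le (hker t) A
  obtain ⟨f, g, hfg⟩ := (A.map φ).le_rank_iff_exists_det_submatrix_ne_zero.1 le_rfl
  rw [det_submatrix_map] at hfg
  obtain ⟨t, ht⟩ := MvPolynomial.exists_eval_ne_zero ((map_ne_zero_iff φ hφ).1 hfg)
  rw [← det_submatrix_map] at ht
  refine le_antisymm ?_ (ciSup_le hle)
  calc (A.map φ).rank ≤ (A.map (MvPolynomial.eval t)).rank :=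
        (A.map _).le_rank_of_det_submatrix_ne_zero f g ht
    _ ≤ ⨆ t : σ → k, (A.map (MvPolynomial.eval t)).rank :=
        le_ciSup ⟨_, Set.forall_mem_range.2 hle⟩ t

end Matrix

/-- Let `k` be an infinite field and `M` an `m × n` matrix with entries in
`k[T_1,…,T_N]`.  Then the rank of `M` over the rational function field
`k(T_1,…,T_N)` equals the maximum over all points `t ∈ k^N` of the rank over `k`
of the specialized matrix `M(t)`. -/
theorem rank_over_function_field_eq_max_rank_of_specializations
    (k : Type*) [Field k] [Infinite k] (m n N : ℕ)
    (M : Matrix (Fin m) (Fin n) (MvPolynomial (Fin N) k)) :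
    (M.map (algebraMap (MvPolynomial (Fin N) k)
        (FractionRing (MvPolynomial (Fin N) k)))).rank =
      ⨆ t : Fin N → k, (M.map (MvPolynomial.eval t)).rank :=
  M.rank_map_eq_iSup_rank_map_eval (IsFractionRing.injective _ _)
end
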